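/- arXiv:2008.03292 — 3 statements merged into one kernel-verified Lean document; each statement's English description precedes it below -/
import Mathlib

section
/- For every permutation w ∈ S_n, the number of cycles of w equals the number of left-to-right maxima (records) of F(w), where F is the Rényi–Foata map. -/
/-- The cycle of `w` containing `x`, listed starting at `x`:
`[x, w x, w² x, …]` with each element appearing once. -/
def cyc {n : ℕ} (w : Equiv.Perm (Fin n)) (x : Fin n) : List (Fin n) :=
  (List.range n).foldl (fun acc k => if (w ^ k) x ∈ acc then acc else acc ++ [(w ^ k) x]) []

/-- The Rényi–Foata word of `w`: write the canonical cycle decomposition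
(each cycle starting with its largest element, cycles listed in increasing
order of largest elements) and drop the parentheses. -/
def foataWord {n : ℕ} (w : Equiv.Perm (Fin n)) : List (Fin n) :=
  ((List.finRange n).filter (fun x => decide (∀ y ∈ cyc w x, y ≤ x))).flatMap (cyc w)

/-- The Rényi–Foata map, as a function `Fin n → Fin n` reading off the word. -/
def foataFun {n : ℕ} (w : Equiv.Perm (Fin n)) : Fin n → Fin n :=
  fun i => (foataWord w).getD i.val ⟨0, i.pos⟩

/-- One-line notation of a permutation, as a list of values in `Fin n`. -/
def oneLineF {n : ℕ} (w : Equiv.Perm (Fin n)) : List (Fin n) :=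
  (List.finRange n).map w

/-- One-line notation with natural-number entries (0-indexed values). -/
def oneLineN {n : ℕ} (w : Equiv.Perm (Fin n)) : List ℕ :=
  (List.finRange n).map fun i => (w i : ℕ)

/-- The Rényi–Foata word with natural-number entries. -/
def wordN {n : ℕ} (w : Equiv.Perm (Fin n)) : List ℕ :=
  (foataWord w).map Fin.val

/-- `i` is a record (left-to-right maximum) position of the word `L`. -/
def recB (L : List ℕ) (i : ℕ) : Bool :=
  decide (i < L.length ∧ ∀ j < i, L.getD j 0 < L.getD i 0)

/-- Number of records (left-to-right maxima) of the word `L`. -/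
def recordCount (L : List ℕ) : ℕ :=
  ((List.range L.length).filter (recB L)).length

/-- Number of fixed points (1-cycles) of `w`. -/
def fixCount {n : ℕ} (w : Equiv.Perm (Fin n)) : ℕ :=
  (Finset.univ.filter fun i : Fin n => w i = i).card

/-- Number of cycles of `w` (nontrivial cycles plus fixed points). -/
def numCycles {n : ℕ} (w : Equiv.Perm (Fin n)) : ℕ :=
  Multiset.card w.cycleType + fixCount w

/-!
Write `F(w)` as the concatenation of the cycles of `w`, each listed from its largest element.
Within a block the first letter exceeds all the others, and the first letters of the blocks
increase from left to right. Hence a letter is a record of `F(w)` exactly when it starts a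
block, and there is one block per cycle.
-/

section AppendIfAbsent

variable {α : Type*} [DecidableEq α]

def appendIfAbsent (acc : List α) (a : α) : List α := if a ∈ acc then acc else acc ++ [a]

lemma mem_foldl_appendIfAbsent (l acc : List α) (y : α) :
    y ∈ l.foldl appendIfAbsent acc ↔ y ∈ acc ∨ y ∈ l := by
  induction l generalizing acc with
  | nil => simp
  | cons a l ih =>
    rw [List.foldl_cons, ih, appendIfAbsent]
    split_ifs with ha
    · simp only [List.mem_cons]
      constructor
      · tauto
      · rintro (h | rfl | h) <;> tauto
    · simp only [List.mem_append, List.mem_cons]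
      tauto

lemma nodup_foldl_appendIfAbsent (l : List α) {acc : List α} (h : acc.Nodup) :
    (l.foldl appendIfAbsent acc).Nodup := by
  induction l generalizing acc with
  | nil => exact h
  | cons a l ih =>
    rw [List.foldl_cons, appendIfAbsent]
    split_ifs with ha
    · exact ih h
    · exact ih (h.append (List.nodup_singleton a) (by simpa using ha))

lemma foldl_appendIfAbsent_eq_append (l acc : List α) :
    ∃ s, l.foldl appendIfAbsent acc = acc ++ s := by
  induction l generalizing acc with
  | nil => exact ⟨[], by simp⟩
  | cons a l ih =>
    rw [List.foldl_cons, appendIfAbsent]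
    split_ifs
    · exact ih acc
    · obtain ⟨s, hs⟩ := ih (acc ++ [a])
      exact ⟨a :: s, by simp [hs]⟩

end AppendIfAbsent

open Finset

namespace Equiv.Perm

variable {α : Type*} [LinearOrder α] (σ : Perm α)

def IsCycleMax (x : α) : Prop := ∀ y, σ.SameCycle x y → y ≤ x

lemma isCycleMax_of_apply_eq_self {x : α} (hx : σ x = x) : σ.IsCycleMax x := by
  rintro y ⟨k, rfl⟩
  rw [zpow_apply_eq_self_of_apply_eq_self hx]

lemma IsCycleMax.eq_of_sameCycle {σ : Perm α} {x y : α} (hx : σ.IsCycleMax x)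
    (hy : σ.IsCycleMax y) (hxy : σ.SameCycle x y) : x = y :=
  le_antisymm (hy x hxy.symm) (hx y hxy)

variable [Fintype α]

instance : DecidablePred σ.IsCycleMax := fun _ => Fintype.decidableForallFintype

lemma isCycleMax_max'_support {c : Perm α} (hc : c ∈ σ.cycleFactorsFinset)
    (hne : c.support.Nonempty) : σ.IsCycleMax (c.support.max' hne) := by
  have hmax := c.support.max'_mem hne
  intro y hy
  refine c.support.le_max' y ?_
  rw [cycle_is_cycleOf hmax hc, mem_support_cycleOf_iff]
  exact ⟨hy, mem_cycleFactorsFinset_support_le hc hmax⟩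

lemma card_isCycleMax_and_apply_ne :
    #{x | σ.IsCycleMax x ∧ σ x ≠ x} = #σ.cycleFactorsFinset := by
  refine card_bij (fun x _ => σ.cycleOf x) ?_ ?_ ?_
  · intro x hx
    simp only [mem_filter, mem_univ, true_and] at hx
    exact cycleOf_mem_cycleFactorsFinset_iff.2 (mem_support.2 hx.2)
  · intro x hx y hy hxy
    simp only [mem_filter, mem_univ, true_and] at hx hy
    have hy' : y ∈ (σ.cycleOf x).support := by
      rw [hxy, mem_support_cycleOf_iff]
      exact ⟨SameCycle.refl _ _, mem_support.2 hy.2⟩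
    exact hx.1.eq_of_sameCycle hy.1 (mem_support_cycleOf_iff.1 hy').1
  · intro c hc
    have hne := (mem_cycleFactorsFinset_iff.1 hc).1.nonempty_support
    have hmax := c.support.max'_mem hne
    refine ⟨c.support.max' hne, ?_, (cycle_is_cycleOf hmax hc).symm⟩
    simp only [mem_filter, mem_univ, true_and]
    exact ⟨σ.isCycleMax_max'_support hc hne,
      mem_support.1 (mem_cycleFactorsFinset_support_le hc hmax)⟩

lemma card_isCycleMax :
    #{x | σ.IsCycleMax x} = Multiset.card σ.cycleType + #{x | σ x = x} := by
  have hfixed : ({x | σ.IsCycleMax x ∧ σ x = x} : Finset α) = ({x | σ x = x} : Finset α) := by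
    ext x
    simp only [mem_filter, mem_univ, true_and, and_iff_right_iff_imp]
    exact σ.isCycleMax_of_apply_eq_self
  rw [← card_filter_add_card_filter_not (p := fun x => σ x = x), filter_filter, filter_filter,
    hfixed, card_isCycleMax_and_apply_ne, cycleType_def, Multiset.card_map, add_comm]
  rfl

end Equiv.Perm

section Cyc

variable {n : ℕ} (w : Equiv.Perm (Fin n))

lemma cyc_eq_foldl (x : Fin n) :
    cyc w x = ((List.range n).map fun k => (w ^ k) x).foldl appendIfAbsent [] := by
  rw [List.foldl_map]
  rfl

lemma mem_cyc_iff_sameCycle {x y : Fin n} : y ∈ cyc w x ↔ w.SameCycle x y := by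
  simp only [cyc_eq_foldl, mem_foldl_appendIfAbsent, List.not_mem_nil, false_or, List.mem_map,
    List.mem_range]
  constructor
  · rintro ⟨k, -, rfl⟩
    exact ⟨k, by simp⟩
  · intro h
    by_cases hx : x ∈ w.support
    · obtain ⟨k, hk, rfl⟩ := h.exists_pow_eq_of_mem_support hx
      exact ⟨k, hk.trans_le ((card_le_univ _).trans_eq (Fintype.card_fin n)), rfl⟩
    · obtain ⟨k, rfl⟩ := h
      rw [Equiv.Perm.zpow_apply_eq_self_of_apply_eq_self (Equiv.Perm.notMem_support.1 hx)]
      exact ⟨0, x.pos, rfl⟩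

lemma nodup_cyc (x : Fin n) : (cyc w x).Nodup := by
  rw [cyc_eq_foldl]
  exact nodup_foldl_appendIfAbsent _ List.nodup_nil

lemma cyc_eq_cons_tail (x : Fin n) : cyc w x = x :: (cyc w x).tail := by
  obtain ⟨m, rfl⟩ : ∃ m, n = m + 1 := Nat.exists_eq_add_one.2 x.pos
  suffices ∃ s, cyc w x = [x] ++ s by
    obtain ⟨s, hs⟩ := this
    rw [hs]
    rfl
  rw [cyc_eq_foldl, List.range_succ_eq_map, List.map_cons, List.foldl_cons, pow_zero]
  exact foldl_appendIfAbsent_eq_append _ [x]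

lemma lt_of_mem_tail_cyc {x y : Fin n} (hx : ∀ z ∈ cyc w x, z ≤ x) (hy : y ∈ (cyc w x).tail) :
    y < x := by
  have hnodup := nodup_cyc w x
  rw [cyc_eq_cons_tail, List.nodup_cons] at hnodup
  refine (hx y (List.mem_of_mem_tail hy)).lt_of_ne ?_
  rintro rfl
  exact hnodup.1 hy

lemma forall_mem_cyc_le_iff_isCycleMax {x : Fin n} : (∀ y ∈ cyc w x, y ≤ x) ↔ w.IsCycleMax x := by
  simp only [mem_cyc_iff_sameCycle, Equiv.Perm.IsCycleMax]

lemma length_filter_forall_mem_cyc_le :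
    ((List.finRange n).filter fun x => decide (∀ y ∈ cyc w x, y ≤ x)).length = numCycles w := by
  rw [numCycles, fixCount, ← w.card_isCycleMax]
  change #{x | ∀ y ∈ cyc w x, y ≤ x} = _
  simp only [forall_mem_cyc_le_iff_isCycleMax]

end Cyc

section Records

lemma recordCount_eq_sum (L : List ℕ) :
    recordCount L = ∑ i ∈ range L.length, if recB L i then 1 else 0 := by
  simp [recordCount, sum_boole, card_def, Multiset.range]

lemma recB_cons_zero (a : ℕ) (L : List ℕ) : recB (a :: L) 0 = true := by
  simp [recB]

lemma recB_cons_cons_one (b a : ℕ) (L : List ℕ) : recB (b :: a :: L) 1 = decide (b < a) := by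
  simp [recB]

lemma recB_cons_cons_add_two (b a : ℕ) (L : List ℕ) (i : ℕ) :
    recB (b :: a :: L) (i + 2) = recB (max b a :: L) (i + 1) := by
  simp only [recB, List.length_cons, Nat.add_lt_add_iff_right, Nat.forall_lt_succ_left,
    List.getD_cons_zero, List.getD_cons_succ, max_lt_iff, and_assoc]

lemma recordCount_cons_cons (b a : ℕ) (L : List ℕ) :
    recordCount (b :: a :: L) = recordCount (max b a :: L) + if b < a then 1 else 0 := by
  simp only [recordCount_eq_sum, List.length_cons, sum_range_succ', recB_cons_cons_add_two,
    zero_add, recB_cons_zero, recB_cons_cons_one, decide_eq_true_eq, if_true]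
  exact add_right_comm _ _ _

lemma recordCount_cons_append_of_forall_le {b : ℕ} {T : List ℕ} (hT : ∀ t ∈ T, t ≤ b)
    (M : List ℕ) : recordCount (b :: (T ++ M)) = recordCount (b :: M) := by
  induction T with
  | nil => rfl
  | cons t T ih =>
    have htb := hT t List.mem_cons_self
    rw [List.cons_append, recordCount_cons_cons, max_eq_left htb, if_neg htb.not_gt,
      ih fun t ht => hT t (List.mem_cons_of_mem _ ht), add_zero]

lemma recordCount_cons_cons_of_lt {b a : ℕ} (h : b < a) (L : List ℕ) :
    recordCount (b :: a :: L) = recordCount (a :: L) + 1 := by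
  rw [recordCount_cons_cons, max_eq_right h.le, if_pos h]

lemma recordCount_flatMap_cons {ι : Type*} (head : ι → ℕ) (tail : ι → List ℕ) (l : List ι)
    (hhead : l.IsChain fun x y => head x < head y) (htail : ∀ x ∈ l, ∀ t ∈ tail x, t < head x) :
    recordCount (l.flatMap fun x => head x :: tail x) = l.length := by
  induction l with
  | nil => rfl
  | cons x l ih =>
    rw [List.flatMap_cons, List.cons_append,
      recordCount_cons_append_of_forall_le fun t ht => (htail x List.mem_cons_self t ht).le]
    cases l with
    | nil => rfl
    | cons y l =>
      rw [List.isChain_cons_cons] at hhead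
      have ih := ih hhead.2 fun z hz => htail z (List.mem_cons_of_mem _ hz)
      rw [List.flatMap_cons, List.cons_append] at ih ⊢
      rw [recordCount_cons_cons_of_lt hhead.1, ih]
      rfl

end Records

/-- For every permutation `w ∈ S_n`, the number of cycles of
`w` equals the number of left-to-right maxima (records) of `F(w)`, where `F`
is the Rényi–Foata map. -/
theorem numCycles_eq_records_foata (n : ℕ) (w : Equiv.Perm (Fin n)) :
    numCycles w = recordCount (wordN w) := by
  set leaders := (List.finRange n).filter fun x => decide (∀ y ∈ cyc w x, y ≤ x)
  have hword : wordN w = leaders.flatMap fun x => x.val :: (cyc w x).tail.map Fin.val := by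
    rw [wordN, foataWord, List.map_flatMap]
    refine List.flatMap_congr fun x _ => ?_
    rw [← List.map_cons, ← cyc_eq_cons_tail]
  have hsorted : leaders.IsChain fun x y => x.val < y.val :=
    ((List.pairwise_lt_finRange n).filter _).isChain
  have htail : ∀ x ∈ leaders, ∀ t ∈ (cyc w x).tail.map Fin.val, t < x.val := by
    intro x hx t ht
    obtain ⟨y, hy, rfl⟩ := List.mem_map.1 ht
    exact lt_of_mem_tail_cyc w (of_decide_eq_true (List.mem_filter.1 hx).2) hy
  rw [hword, recordCount_flatMap_cons _ _ _ hsorted htail, length_filter_forall_mem_cyc_le]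
end

section
/- Let φ = F ∘ I ∘ F^{-1} ∘ R : S_n → S_n, where F is the Rényi–Foata map, I is inversion, and R is reversal. Then for any permutation written in one-line notation as w = A n B (where A, B are the subwords before and after the maximal letter n), φ(AnB) = φ(B) n A, where φ is applied to the partial permutation B via the canonical order-isomorphism to a smaller symmetric group. -/
/-- `IsPhi w w'` says that `w' = φ(w)` where `φ = F ∘ I ∘ F⁻¹ ∘ R`:
first reverse the one-line notation of `w`, then apply `F⁻¹` (giving the
unique `u` whose Foata word is that reversal), invert `u`, and apply `F`. -/
def IsPhi {n : ℕ} (w w' : Equiv.Perm (Fin n)) : Prop :=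
  ∃ u : Equiv.Perm (Fin n),
    foataWord u = (oneLineF w).reverse ∧ oneLineF w' = foataWord u⁻¹

/-- `IsPhiBar w w'` says that `w' = φ̄(w)` where `φ̄ = I ∘ F⁻¹ ∘ R ∘ F`:
apply `F` to `w`, reverse the resulting word, apply `F⁻¹`, and invert. -/
def IsPhiBar {n : ℕ} (w w' : Equiv.Perm (Fin n)) : Prop :=
  foataWord w'⁻¹ = (foataWord w).reverse

/-- `IsGamma w w'` says that `w' = γ(w)` where `γ = I ∘ F⁻¹ ∘ C ∘ F`:
apply `F` to `w`, complement each entry of the resulting word, apply `F⁻¹`,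
and invert. -/
def IsGamma {n : ℕ} (w w' : Equiv.Perm (Fin n)) : Prop :=
  foataWord w'⁻¹ = (foataWord w).map Fin.rev

/-- Standardization of a word `L` with distinct entries: replace each entry by
its rank (number of entries of `L` smaller than it), giving the one-line word
of a permutation of `Fin L.length` via the canonical order-isomorphism. -/
def stdz (L : List ℕ) : List ℕ :=
  L.map fun x => (L.filter fun y => decide (y < x)).length

/-- `IsPhiWord L L'` says that `L' = φ(L)` for partial permutations (words
with distinct entries), where `φ` is applied via the canonical
order-isomorphism with a permutation of `Fin L.length`. -/
def IsPhiWord (L L' : List ℕ) : Prop :=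
  L'.Perm L ∧ ∃ u u' : Equiv.Perm (Fin L.length),
    oneLineN u = stdz L ∧ IsPhi u u' ∧ stdz L' = oneLineN u'

/-!
`F⁻¹` reads a word as a product of cycles, one beginning at each left-to-right maximum, and
inverting a permutation reverses each cycle behind its first (largest) letter without changing
the cycle maxima. So `φ(w)` is computed by cutting the reversal of `w` before its left-to-right
maxima and reversing the tail of every factor. For `w = A n B` the reversal is `Bʳ n Aʳ`, whose
last factor is `n Aʳ`; this gives `φ(B) n A`, and since the construction commutes with
order-preserving relabellings, the first part is `φ` of the partial permutation `B`.
-/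

namespace List

variable {α β : Type*}

theorem takeWhile_congr {p q : α → Bool} {l : List α} (h : ∀ x ∈ l, p x = q x) :
    l.takeWhile p = l.takeWhile q := by
  induction l with
  | nil => rfl
  | cons a l ih =>
    simp only [takeWhile_cons, h a mem_cons_self, ih fun x hx => h x (mem_cons_of_mem _ hx)]

theorem dropWhile_congr {p q : α → Bool} {l : List α} (h : ∀ x ∈ l, p x = q x) :
    l.dropWhile p = l.dropWhile q := by
  induction l with
  | nil => rfl
  | cons a l ih =>
    simp only [dropWhile_cons, h a mem_cons_self, ih fun x hx => h x (mem_cons_of_mem _ hx)]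

theorem takeWhile_append_cons_of_not {p : α → Bool} {c : α} (hc : p c = false)
    (l m : List α) : (l ++ c :: m).takeWhile p = l.takeWhile p := by
  induction l with
  | nil => simp [hc]
  | cons a l ih => cases h : p a <;> simp [h, ih]

theorem dropWhile_append_cons_of_not {p : α → Bool} {c : α} (hc : p c = false)
    (l m : List α) : (l ++ c :: m).dropWhile p = l.dropWhile p ++ c :: m := by
  induction l with
  | nil => simp [hc]
  | cons a l ih => cases h : p a <;> simp [h, ih]

theorem eq_of_map_eq_of_injOn {f : α → β} {s : Set α} (hf : s.InjOn f) :
    ∀ {l₁ l₂ : List α}, (∀ x ∈ l₁, x ∈ s) → (∀ x ∈ l₂, x ∈ s) → l₁.map f = l₂.map f → l₁ = l₂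
  | [], [], _, _, _ => rfl
  | a :: l₁, b :: l₂, h₁, h₂, h => by
    simp only [map_cons, cons.injEq] at h
    rw [hf (h₁ a mem_cons_self) (h₂ b mem_cons_self) h.1,
      eq_of_map_eq_of_injOn hf (fun x hx => h₁ x (mem_cons_of_mem _ hx))
        (fun x hx => h₂ x (mem_cons_of_mem _ hx)) h.2]

end List

namespace Foata

open List MulAction

section Blocks

variable {α β : Type*} [LinearOrder α] [LinearOrder β]

/-- Cuts a word before each left-to-right maximum; on a Foata word the factors are the cycles. -/
def blocks : List α → List (List α)
  | [] => []
  | a :: l => (a :: l.takeWhile (· < a)) :: blocks (l.dropWhile (· < a))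
  termination_by l => l.length
  decreasing_by exact Nat.lt_succ_of_le (dropWhile_sublist _).length_le

@[simp] theorem blocks_nil : blocks ([] : List α) = [] := by rw [blocks]

theorem blocks_cons (a : α) (l : List α) :
    blocks (a :: l) = (a :: l.takeWhile (· < a)) :: blocks (l.dropWhile (· < a)) := by
  rw [blocks]

@[simp] theorem flatten_blocks (l : List α) : (blocks l).flatten = l := by
  induction l using blocks.induct with
  | case1 => simp
  | case2 a l ih => rw [blocks_cons, flatten_cons, ih, cons_append, takeWhile_append_dropWhile]

theorem blocks_flatMap {M : List α} (hM : M.Pairwise (· < ·)) {g : α → List α}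
    (hg : ∀ m ∈ M, ∃ t, g m = m :: t ∧ ∀ x ∈ t, x < m) :
    blocks (M.flatMap g) = M.map g := by
  induction M with
  | nil => simp
  | cons m M ih =>
    obtain ⟨t, hgm, ht⟩ := hg m mem_cons_self
    have hrest : (M.flatMap g).takeWhile (· < m) = [] ∧
        (M.flatMap g).dropWhile (· < m) = M.flatMap g := by
      cases M with
      | nil => simp
      | cons m' M =>
        obtain ⟨t', hgm', -⟩ := hg m' (mem_cons_of_mem _ mem_cons_self)
        have : ¬ m' < m := not_lt_of_gt ((pairwise_cons.1 hM).1 m' mem_cons_self)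
        simp [hgm', this]
    rw [flatMap_cons, hgm, cons_append, blocks_cons, takeWhile_append_of_pos (by simpa using ht),
      dropWhile_append_of_pos (by simpa using ht), hrest.1, hrest.2, append_nil,
      ih (pairwise_cons.1 hM).2 fun m' hm' => hg m' (mem_cons_of_mem _ hm'), map_cons, hgm]

theorem blocks_append_cons {c : α} {l m : List α} (hl : ∀ x ∈ l, x < c) (hm : ∀ x ∈ m, x < c) :
    blocks (l ++ c :: m) = blocks l ++ [c :: m] := by
  induction l using blocks.induct with
  | case1 =>
    rw [nil_append, blocks_cons, takeWhile_eq_self_iff.2 (by simpa using hm),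
      dropWhile_eq_nil_iff.2 (by simpa using hm), blocks_nil, nil_append]
  | case2 a l ih =>
    have hca : decide (c < a) = false := by simpa using (hl a mem_cons_self).le
    rw [cons_append, blocks_cons, blocks_cons,
      takeWhile_append_cons_of_not (p := (· < a)) hca,
      dropWhile_append_cons_of_not (p := (· < a)) hca,
      ih fun x hx => hl x (mem_cons_of_mem _ ((dropWhile_sublist _).mem hx)), cons_append]

theorem blocks_map {f : α → β} {l : List α} (hf : StrictMonoOn f {x | x ∈ l}) :
    blocks (l.map f) = (blocks l).map (map f) := by
  induction l using blocks.induct with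
  | case1 => simp
  | case2 a l ih =>
    have hlt : ∀ x ∈ l, decide (f x < f a) = decide (x < a) := fun x hx =>
      decide_eq_decide.2 (hf.lt_iff_lt (mem_cons_of_mem _ hx) mem_cons_self)
    rw [map_cons, blocks_cons, blocks_cons, takeWhile_map, dropWhile_map,
      Function.comp_def, takeWhile_congr hlt, dropWhile_congr hlt,
      ih (hf.mono fun x hx => mem_cons_of_mem _ ((dropWhile_sublist _).mem hx)), map_cons, map_cons]

end Blocks

section PhiWord

variable {α β : Type*}

/-- The inverse of the cycle written `a :: t` is the cycle written `a :: t.reverse`. -/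
def reverseTail : List α → List α
  | [] => []
  | a :: t => a :: t.reverse

@[simp] theorem reverseTail_cons (a : α) (t : List α) : reverseTail (a :: t) = a :: t.reverse :=
  rfl

theorem reverseTail_perm (l : List α) : reverseTail l ~ l := by
  cases l with
  | nil => rfl
  | cons a t => exact t.reverse_perm.cons a

theorem reverseTail_map (f : α → β) (l : List α) :
    reverseTail (l.map f) = (reverseTail l).map f := by
  cases l <;> simp [reverseTail]

variable [LinearOrder α] [LinearOrder β]

/-- `φ = F ∘ I ∘ F⁻¹ ∘ R` on words: cut the reversed word into its cycles and invert each. -/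
def phiWord (l : List α) : List α := (blocks l.reverse).flatMap reverseTail

theorem phiWord_perm (l : List α) : phiWord l ~ l :=
  calc phiWord l ~ (blocks l.reverse).flatMap id :=
        Perm.flatMap_left _ fun b _ => reverseTail_perm b
    _ = l.reverse := by simp
    _ ~ l := reverse_perm l

theorem phiWord_map {f : α → β} {l : List α} (hf : StrictMonoOn f {x | x ∈ l}) :
    phiWord (l.map f) = (phiWord l).map f := by
  rw [phiWord, phiWord, ← map_reverse, blocks_map (by simpa using hf), flatMap_map, map_flatMap]
  simp only [reverseTail_map]

theorem phiWord_append_cons {c : α} {l m : List α} (hl : ∀ x ∈ l, x < c) (hm : ∀ x ∈ m, x < c) :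
    phiWord (l ++ c :: m) = phiWord m ++ c :: l := by
  rw [phiWord, reverse_append, reverse_cons, append_assoc, singleton_append,
    blocks_append_cons (by simpa using hm) (by simpa using hl)]
  simp [phiWord]

end PhiWord

section AppendIfNew

variable {α : Type*} [DecidableEq α]

def appendIfNew (acc : List α) (x : α) : List α := if x ∈ acc then acc else acc ++ [x]

theorem foldl_appendIfNew_of_forall_mem {acc l : List α} (h : ∀ x ∈ l, x ∈ acc) :
    l.foldl appendIfNew acc = acc := by
  induction l with
  | nil => rfl
  | cons a l ih =>
    rw [foldl_cons, appendIfNew, if_pos (h a mem_cons_self)]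
    exact ih fun x hx => h x (mem_cons_of_mem _ hx)

theorem foldl_appendIfNew_of_nodup {acc l : List α} (hl : l.Nodup) (h : ∀ x ∈ l, x ∉ acc) :
    l.foldl appendIfNew acc = acc ++ l := by
  induction l generalizing acc with
  | nil => simp
  | cons a l ih =>
    obtain ⟨hal, hl⟩ := nodup_cons.1 hl
    rw [foldl_cons, appendIfNew, if_neg (h a mem_cons_self), ih hl, append_assoc, singleton_append]
    intro x hx hx'
    rcases mem_append.1 hx' with hx' | hx'
    · exact h x (mem_cons_of_mem _ hx) hx'
    · exact hal (mem_singleton.1 hx' ▸ hx)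

end AppendIfNew

section Cycles

variable {n : ℕ} (u : Equiv.Perm (Fin n)) (x : Fin n)

theorem period_pos : 0 < period u x := period_pos_of_orderOf_pos (orderOf_pos u) x

theorem nodup_map_range_period : ((range (period u x)).map fun k => (u ^ k) x).Nodup := by
  refine nodup_range.map_on fun i hi j hj h => ?_
  simp only [← Equiv.Perm.iterate_eq_pow] at h
  exact Function.iterate_injOn_Iio_minimalPeriod (mem_range.1 hi) (mem_range.1 hj) h

theorem cyc_eq_map_range_period : cyc u x = (range (period u x)).map fun k => (u ^ k) x := by
  set p := period u x
  have hnodup := nodup_map_range_period u x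
  have hpn : p ≤ n := by simpa using hnodup.length_le_card
  have hcyc : cyc u x = ((range n).map fun k => (u ^ k) x).foldl appendIfNew [] := by
    rw [foldl_map]; rfl
  have hrange : range n = range p ++ (range (n - p)).map (p + ·) := by
    rw [← range_add, Nat.add_sub_cancel' hpn]
  rw [hcyc, hrange, map_append, foldl_append,
    foldl_appendIfNew_of_nodup hnodup (by simp), nil_append]
  refine foldl_appendIfNew_of_forall_mem fun y hy => ?_
  obtain ⟨k, -, rfl⟩ := mem_map.1 hy
  exact mem_map.2 ⟨k % p, mem_range.2 (Nat.mod_lt _ (period_pos u x)),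
    pow_mod_period_smul (m := u) (a := x) k⟩

theorem cyc_eq_cons : cyc u x = x :: (range (period u x - 1)).map fun k => (u ^ (k + 1)) x := by
  rw [cyc_eq_map_range_period, ← Nat.sub_add_cancel (period_pos u x), range_succ_eq_map]
  simp [Function.comp_def]

theorem cyc_nodup : (cyc u x).Nodup := by
  rw [cyc_eq_map_range_period]
  exact nodup_map_range_period u x

theorem cyc_inv : cyc u⁻¹ x = reverseTail (cyc u x) := by
  rw [cyc_eq_cons, cyc_eq_cons, period_inv, reverseTail_cons, cons.injEq]
  refine ⟨rfl, ext_getElem (by simp) fun i hi _ => ?_⟩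
  simp only [length_map, length_range] at hi
  simp only [getElem_map, getElem_range, getElem_reverse, length_map, length_range, inv_pow,
    Equiv.Perm.inv_eq_iff_eq, ← Equiv.Perm.mul_apply, ← pow_add]
  rw [show i + 1 + (period u x - 1 - 1 - i + 1) = period u x by omega]
  exact (pow_period_smul u x).symm

end Cycles

theorem foataWord_inv {n : ℕ} (u : Equiv.Perm (Fin n)) :
    foataWord u⁻¹ = (blocks (foataWord u)).flatMap reverseTail := by
  set M := (finRange n).filter fun x => decide (∀ y ∈ cyc u x, y ≤ x)
  have hmax : ∀ x, (∀ y ∈ cyc u⁻¹ x, y ≤ x) ↔ ∀ y ∈ cyc u x, y ≤ x := fun x => by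
    simp only [cyc_inv, (reverseTail_perm _).mem_iff]
  have hinv : foataWord u⁻¹ = M.flatMap fun x => reverseTail (cyc u x) := by
    rw [foataWord]
    congr 1
    · exact funext (cyc_inv u)
    · simp only [M, hmax]
  have hcycles : ∀ m ∈ M, ∃ t, cyc u m = m :: t ∧ ∀ y ∈ t, y < m := fun m hm => by
    have hle : ∀ y ∈ cyc u m, y ≤ m := by simpa [M] using hm
    have hnodup := cyc_nodup u m
    rw [cyc_eq_cons] at hle hnodup ⊢
    refine ⟨_, rfl, fun y hy => lt_of_le_of_ne (hle y (mem_cons_of_mem _ hy)) ?_⟩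
    rintro rfl
    exact (nodup_cons.1 hnodup).1 hy
  rw [hinv, show foataWord u = M.flatMap (cyc u) from rfl,
    blocks_flatMap ((pairwise_lt_finRange n).filter _) hcycles, flatMap_map]

theorem oneLineN_of_isPhi {n : ℕ} {w w' : Equiv.Perm (Fin n)} (h : IsPhi w w') :
    oneLineN w' = phiWord (oneLineN w) := by
  obtain ⟨u, hu, hw'⟩ := h
  have hF : oneLineF w' = phiWord (oneLineF w) := by rw [hw', foataWord_inv, hu]; rfl
  have hN : ∀ v : Equiv.Perm (Fin n), oneLineN v = (oneLineF v).map Fin.val := fun v => by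
    simp [oneLineN, oneLineF]
  rw [hN, hN, hF, phiWord_map (Fin.val_strictMono.strictMonoOn _)]

def rank (l : List ℕ) (x : ℕ) : ℕ := (l.filter fun y => decide (y < x)).length

theorem rank_strictMonoOn (l : List ℕ) : StrictMonoOn (rank l) {x | x ∈ l} := by
  intro x hx y _ hxy
  have hsub : (l.filter fun z => decide (z < y)).filter (fun z => decide (z < x)) =
      l.filter fun z => decide (z < x) := by
    rw [filter_filter]
    exact filter_congr fun z _ => by simpa using fun hzx => hzx.trans hxy
  rw [rank, rank, ← hsub]
  exact length_filter_lt_length_iff_exists.2 ⟨x, by simpa using ⟨hx, hxy⟩, by simp⟩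

theorem stdz_eq_map_rank_of_perm {l l' : List ℕ} (h : l' ~ l) : stdz l' = l'.map (rank l) :=
  map_congr_left fun _ _ => (h.filter _).length_eq

theorem eq_phiWord_of_isPhiWord {l l' : List ℕ} (h : IsPhiWord l l') : l' = phiWord l := by
  obtain ⟨hperm, u, u', hu, hphi, hu'⟩ := h
  have hrank : l'.map (rank l) = (phiWord l).map (rank l) :=
    calc l'.map (rank l) = oneLineN u' := (stdz_eq_map_rank_of_perm hperm).symm.trans hu'
      _ = phiWord (l.map (rank l)) := by rw [oneLineN_of_isPhi hphi, hu]; rfl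
      _ = (phiWord l).map (rank l) := phiWord_map (rank_strictMonoOn l)
  exact eq_of_map_eq_of_injOn (rank_strictMonoOn l).injOn (fun x hx => hperm.subset hx)
    (fun x hx => (phiWord_perm l).subset hx) hrank

theorem lt_of_oneLineN_eq_append_cons {n : ℕ} {w : Equiv.Perm (Fin n)} {l m : List ℕ}
    (hw : oneLineN w = l ++ (n - 1) :: m) :
    (∀ x ∈ l, x < n - 1) ∧ ∀ x ∈ m, x < n - 1 := by
  have hnodup : (l ++ (n - 1) :: m).Nodup :=
    hw ▸ (nodup_finRange n).map (Fin.val_injective.comp w.injective)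
  have hlt : ∀ x ∈ l ++ (n - 1) :: m, x < n := fun x hx => by
    obtain ⟨i, -, rfl⟩ := mem_map.1 (hw ▸ hx)
    exact (w i).isLt
  obtain ⟨-, hm, hdisj⟩ := nodup_append.1 hnodup
  refine ⟨fun x hx => ?_, fun x hx => ?_⟩
  · have hne := hdisj x hx _ mem_cons_self
    have hxn := hlt x (mem_append_left _ hx)
    omega
  · have hne : x ≠ n - 1 := fun h => (nodup_cons.1 hm).1 (h ▸ hx)
    have hxn := hlt x (mem_append_right _ (mem_cons_of_mem _ hx))
    omega

end Foata

/-- Let `φ = F ∘ I ∘ F⁻¹ ∘ R`.  If `w = A n B` in one-line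
notation (`A`, `B` the subwords before and after the maximal letter, which is
`n - 1` in 0-indexed values), then `φ(w) = φ(B) n A`, where `φ` is applied to
the partial permutation `B` via the canonical order-isomorphism. -/
theorem phi_recursion (n : ℕ) (w w' : Equiv.Perm (Fin n)) (A B B' : List ℕ)
    (hw : oneLineN w = A ++ (n - 1) :: B)
    (hphi : IsPhi w w')
    (hB : IsPhiWord B B') :
    oneLineN w' = B' ++ (n - 1) :: A := by
  obtain ⟨hA, hB'⟩ := Foata.lt_of_oneLineN_eq_append_cons hw
  rw [Foata.oneLineN_of_isPhi hphi, hw, Foata.phiWord_append_cons hA hB',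
    Foata.eq_phiWord_of_isPhiWord hB]
end

section
/- The statistic Fix (number of fixed points) is 1-mesic for the action of φ̄ = I ∘ F^{-1} ∘ R ∘ F on S_n: the average of Fix over every φ̄-orbit equals 1. -/
/-!
Read the Foata word `F w` as cut into blocks at its records (left-to-right maxima): the blocks
are the cycles of `w`, each starting with its largest element, so the fixed points of `w` are
the blocks of length one. Inverting `w` reverses every cycle, whence
`F w⁻¹ = T (reverse (F w))` for the word map `T (P ++ M :: Q) = T Q ++ M :: P` (`M` the
maximum), and therefore `F ∘ φ̄ = T ∘ F`. It remains to see that the number `B` of blocks of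
length one averages to `1` along every `T`-orbit of a nonempty word with distinct letters.
Since `T² (P ++ M :: Q) = T P ++ M :: T Q`, every period of `P ++ M :: Q` is twice a common
period of `P` and `Q` (unless the word is `[M]`), and two consecutive steps contribute
`B (Tᵏ P) + [P = []] + B (Tᵏ⁺¹ Q) + [Q = []]`; induction on the length concludes.
-/

open List Function

section Sums

variable {M : Type*}

lemma Finset.sum_range_two_mul [AddCommMonoid M] (f : ℕ → M) (s : ℕ) :
    ∑ j ∈ Finset.range (2 * s), f j = ∑ k ∈ Finset.range s, (f (2 * k) + f (2 * k + 1)) := by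
  induction s with
  | zero => simp
  | succ s ih =>
    rw [Nat.mul_succ, Finset.sum_range_succ, Finset.sum_range_succ, ih, Finset.sum_range_succ,
      add_assoc]

lemma Finset.sum_range_iterate_succ [AddCancelCommMonoid M] {β : Type*} (g : β → M)
    {f : β → β} {x : β} {m : ℕ} (hx : f^[m] x = x) :
    ∑ k ∈ Finset.range m, g (f^[k + 1] x) = ∑ k ∈ Finset.range m, g (f^[k] x) := by
  have h := Finset.sum_range_succ' (fun k => g (f^[k] x)) m
  rw [Finset.sum_range_succ, hx] at h
  exact (add_right_cancel h).symm

end Sums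

section WordCombinatorics

variable {α : Type*}

lemma List.length_takeWhile_lt {p : α → Bool} {L : List α} {x : α} (hx : x ∈ L)
    (hpx : p x = false) :
    (L.takeWhile p).length < L.length := by
  refine lt_of_le_of_ne (takeWhile_prefix p).length_le fun h => ?_
  have := takeWhile_eq_self_iff.1 ((takeWhile_prefix p).sublist.length_eq.1 h) x hx
  simp_all

lemma List.length_tail_dropWhile_lt {p : α → Bool} {L : List α} {x : α} (hx : x ∈ L) :
    (L.dropWhile p).tail.length < L.length := by
  have := (dropWhile_suffix p (l := L)).length_le
  have := length_pos_of_mem hx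
  rw [length_tail]
  omega

lemma List.dropWhile_ne_eq_cons [DecidableEq α] {L : List α} {M : α} (hM : M ∈ L) :
    L.dropWhile (· ≠ M) = M :: (L.dropWhile (· ≠ M)).tail := by
  have hne : L.dropWhile (· ≠ M) ≠ [] := by
    intro h
    have hL := takeWhile_append_dropWhile (p := (· ≠ M)) (l := L)
    rw [h, append_nil] at hL
    rw [← hL] at hM
    simpa using mem_takeWhile_imp hM
  have hhead : (L.dropWhile (· ≠ M)).head hne = M := by
    simpa using head_dropWhile_not (· ≠ M) hne
  have h := (cons_head_tail hne).symm
  rwa [hhead] at h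

variable [LinearOrder α]

lemma List.max_append_cons {P Q : List α} {M : α} (hP : ∀ x ∈ P, x < M) (hQ : ∀ x ∈ Q, x ≤ M) :
    (P ++ M :: Q).max (by simp) = M := by
  refine (max_eq_iff _).2 ⟨by simp, fun x hx => ?_⟩
  simp only [mem_append, mem_cons] at hx
  rcases hx with hx | hx | hx
  exacts [(hP x hx).le, hx.le, hQ x hx]

lemma List.takeWhile_append_cons_max {P Q : List α} {M : α} (hP : ∀ x ∈ P, x < M) :
    (P ++ M :: Q).takeWhile (· ≠ M) = P := by
  rw [takeWhile_append_of_pos (by simpa using fun x hx => (hP x hx).ne)]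
  simp

lemma List.dropWhile_append_cons_max {P Q : List α} {M : α} (hP : ∀ x ∈ P, x < M) :
    (P ++ M :: Q).dropWhile (· ≠ M) = M :: Q := by
  rw [dropWhile_append_of_pos (by simpa using fun x hx => (hP x hx).ne)]
  simp

def swapAtMax (L : List α) : List α :=
  if hL : L = [] then [] else
    let M := L.max hL
    swapAtMax (L.dropWhile (· ≠ M)).tail ++ M :: L.takeWhile (· ≠ M)
termination_by L.length
decreasing_by exact length_tail_dropWhile_lt (max_mem hL)

/-- The records (left-to-right maxima) of a word cut it into blocks, each starting with its
record; this counts the blocks of length one. -/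
def singletonBlockCount (L : List α) : ℕ :=
  if hL : L = [] then 0 else
    let M := L.max hL
    singletonBlockCount (L.takeWhile (· ≠ M)) + if (L.dropWhile (· ≠ M)).tail = [] then 1 else 0
termination_by L.length
decreasing_by exact length_takeWhile_lt (max_mem hL) (by simp)

@[simp] lemma swapAtMax_nil : swapAtMax ([] : List α) = [] := by
  simp [swapAtMax]

@[simp] lemma singletonBlockCount_nil : singletonBlockCount ([] : List α) = 0 := by
  simp [singletonBlockCount]

variable {P Q : List α} {M : α}

lemma swapAtMax_append_cons (hP : ∀ x ∈ P, x < M) (hQ : ∀ x ∈ Q, x ≤ M) :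
    swapAtMax (P ++ M :: Q) = swapAtMax Q ++ M :: P := by
  rw [swapAtMax, dif_neg (by simp)]
  simp only [max_append_cons hP hQ, dropWhile_append_cons_max hP, takeWhile_append_cons_max hP,
    tail_cons]

lemma singletonBlockCount_append_cons (hP : ∀ x ∈ P, x < M) (hQ : ∀ x ∈ Q, x ≤ M) :
    singletonBlockCount (P ++ M :: Q) = singletonBlockCount P + if Q = [] then 1 else 0 := by
  rw [singletonBlockCount, dif_neg (by simp)]
  simp only [max_append_cons hP hQ, dropWhile_append_cons_max hP, takeWhile_append_cons_max hP,
    tail_cons]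

lemma List.exists_eq_append_cons_max {L : List α} (hL : L ≠ []) :
    ∃ P M Q, L = P ++ M :: Q ∧ (∀ x ∈ P, x < M) ∧ ∀ x ∈ Q, x ≤ M := by
  set M := L.max hL
  have hMmax : ∀ x ∈ L, x ≤ M := (List.max_le_iff hL).1 le_rfl
  refine ⟨L.takeWhile (· ≠ M), M, (L.dropWhile (· ≠ M)).tail, ?_, fun x hx => ?_,
    fun x hx => hMmax x ((dropWhile_suffix _).subset (mem_of_mem_tail hx))⟩
  · rw [← dropWhile_ne_eq_cons (max_mem hL), takeWhile_append_dropWhile]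
  · exact (hMmax x ((takeWhile_prefix _).subset hx)).lt_of_ne (by simpa using mem_takeWhile_imp hx)

theorem List.induction_append_cons_max {motive : List α → Prop} (nil : motive [])
    (append_cons : ∀ P M Q, (∀ x ∈ P, x < M) → (∀ x ∈ Q, x ≤ M) →
      motive P → motive Q → motive (P ++ M :: Q)) (L : List α) : motive L := by
  induction h : L.length using Nat.strong_induction_on generalizing L with
  | _ n ih =>
    rcases eq_or_ne L [] with rfl | hL
    · exact nil
    obtain ⟨P, M, Q, rfl, hP, hQ⟩ := exists_eq_append_cons_max hL
    simp only [length_append, length_cons] at h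
    exact append_cons P M Q hP hQ (ih _ (by omega) P rfl) (ih _ (by omega) Q rfl)

lemma swapAtMax_perm (L : List α) : swapAtMax L ~ L := by
  induction L using induction_append_cons_max with
  | nil => simp
  | append_cons P M Q hP hQ _ ihQ =>
    rw [swapAtMax_append_cons hP hQ]
    exact (ihQ.append_right _).trans
      (perm_middle.trans ((perm_append_comm.cons M).trans perm_middle.symm))

lemma swapAtMax_iterate_perm (k : ℕ) (L : List α) : swapAtMax^[k] L ~ L := by
  induction k with
  | zero => rfl
  | succ k ih => rw [iterate_succ_apply']; exact (swapAtMax_perm _).trans ih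

lemma swapAtMax_iterate_eq_nil_iff {k : ℕ} {L : List α} : swapAtMax^[k] L = [] ↔ L = [] :=
  ⟨fun h => ((swapAtMax_iterate_perm k L).symm.trans (h ▸ Perm.refl _)).eq_nil,
    by rintro rfl; exact Function.iterate_fixed swapAtMax_nil k⟩

lemma forall_mem_swapAtMax_iterate {p : α → Prop} {L : List α} (h : ∀ x ∈ L, p x) (k : ℕ) :
    ∀ x ∈ swapAtMax^[k] L, p x :=
  fun x hx => h x ((swapAtMax_iterate_perm k L).subset hx)

lemma List.append_cons_max_inj {P' Q' : List α} (hP : ∀ x ∈ P, x < M) (hP' : ∀ x ∈ P', x < M)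
    (h : P ++ M :: Q = P' ++ M :: Q') : P = P' ∧ Q = Q' := by
  have hpre := congrArg (takeWhile (· ≠ M)) h
  have hsuf := congrArg (dropWhile (· ≠ M)) h
  rw [takeWhile_append_cons_max hP, takeWhile_append_cons_max hP'] at hpre
  rw [dropWhile_append_cons_max hP, dropWhile_append_cons_max hP', cons.injEq] at hsuf
  exact ⟨hpre, hsuf.2⟩

section Iterate

variable (hP : ∀ x ∈ P, x < M) (hQ : ∀ x ∈ Q, x < M)
include hP hQ

lemma swapAtMax_iterate_two_mul (s : ℕ) :
    swapAtMax^[2 * s] (P ++ M :: Q) = swapAtMax^[s] P ++ M :: swapAtMax^[s] Q := by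
  induction s with
  | zero => rfl
  | succ s ih =>
    rw [Nat.mul_succ, iterate_succ_apply', iterate_succ_apply', ih,
      swapAtMax_append_cons (forall_mem_swapAtMax_iterate hP s)
        (fun x hx => (forall_mem_swapAtMax_iterate hQ s x hx).le),
      ← iterate_succ_apply' swapAtMax s Q,
      swapAtMax_append_cons (forall_mem_swapAtMax_iterate hQ (s + 1))
        (fun x hx => (forall_mem_swapAtMax_iterate hP s x hx).le),
      ← iterate_succ_apply' swapAtMax s P]

lemma swapAtMax_iterate_two_mul_add_one (s : ℕ) :
    swapAtMax^[2 * s + 1] (P ++ M :: Q) = swapAtMax^[s + 1] Q ++ M :: swapAtMax^[s] P := by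
  rw [iterate_succ_apply', swapAtMax_iterate_two_mul hP hQ,
    swapAtMax_append_cons (forall_mem_swapAtMax_iterate hP s)
      (fun x hx => (forall_mem_swapAtMax_iterate hQ s x hx).le), iterate_succ_apply']

lemma singletonBlockCount_iterate_two_mul_add (k : ℕ) :
    singletonBlockCount (swapAtMax^[2 * k] (P ++ M :: Q)) +
        singletonBlockCount (swapAtMax^[2 * k + 1] (P ++ M :: Q)) =
      (singletonBlockCount (swapAtMax^[k] P) + if P = [] then 1 else 0) +
        (singletonBlockCount (swapAtMax^[k + 1] Q) + if Q = [] then 1 else 0) := by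
  rw [swapAtMax_iterate_two_mul hP hQ, swapAtMax_iterate_two_mul_add_one hP hQ,
    singletonBlockCount_append_cons (forall_mem_swapAtMax_iterate hP k)
      (fun x hx => (forall_mem_swapAtMax_iterate hQ k x hx).le),
    singletonBlockCount_append_cons (forall_mem_swapAtMax_iterate hQ (k + 1))
      (fun x hx => (forall_mem_swapAtMax_iterate hP k x hx).le)]
  simp only [swapAtMax_iterate_eq_nil_iff]
  ring

/-- After an odd number of steps `M` is preceded by an image of `Q`, which cannot be `P` when
`P` and `Q` are disjoint, unless both are empty. -/
lemma eq_nil_or_exists_iterate_eq_self_of_iterate_eq_self (hPQ : P.Disjoint Q) {m : ℕ}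
    (hm : swapAtMax^[m] (P ++ M :: Q) = P ++ M :: Q) :
    (P = [] ∧ Q = []) ∨ ∃ s, m = 2 * s ∧ swapAtMax^[s] P = P ∧ swapAtMax^[s] Q = Q := by
  obtain ⟨s, rfl | rfl⟩ := Nat.even_or_odd' m
  · rw [swapAtMax_iterate_two_mul hP hQ] at hm
    exact Or.inr ⟨s, rfl, append_cons_max_inj (forall_mem_swapAtMax_iterate hP s) hP hm⟩
  · rw [swapAtMax_iterate_two_mul_add_one hP hQ] at hm
    have hQP : Q ~ P := (swapAtMax_iterate_perm (s + 1) Q).symm.trans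
      ((append_cons_max_inj (forall_mem_swapAtMax_iterate hQ (s + 1)) hP hm).1 ▸ Perm.refl _)
    have hP : P = [] := eq_nil_iff_forall_not_mem.2 fun x hx => hPQ hx (hQP.symm.subset hx)
    exact Or.inl ⟨hP, (hP ▸ hQP).eq_nil⟩

end Iterate

end WordCombinatorics

section OrbitSum

variable {α : Type*} [LinearOrder α]

lemma swapAtMax_singleton (M : α) : swapAtMax [M] = [M] := by
  simpa using swapAtMax_append_cons (P := []) (Q := []) (M := M) (by simp) (by simp)

lemma singletonBlockCount_singleton (M : α) : singletonBlockCount [M] = 1 := by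
  simpa using singletonBlockCount_append_cons (P := []) (Q := []) (M := M) (by simp) (by simp)

theorem sum_singletonBlockCount_swapAtMax_iterate {L : List α} (hL : L.Nodup) {m : ℕ}
    (hm : swapAtMax^[m] L = L) :
    ∑ k ∈ Finset.range m, singletonBlockCount (swapAtMax^[k] L) = if L = [] then 0 else m := by
  induction L using induction_append_cons_max generalizing m with
  | nil => simp [Function.iterate_fixed swapAtMax_nil]
  | append_cons P M Q hP hQ ihP ihQ =>
    obtain ⟨hMPQ, hPQnd⟩ := nodup_cons.1 (nodup_middle.1 hL)
    obtain ⟨hPnd, hQnd, -⟩ := nodup_append.1 hPQnd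
    have hQ' : ∀ x ∈ Q, x < M :=
      fun x hx => (hQ x hx).lt_of_ne (ne_of_mem_of_not_mem hx fun h => hMPQ (mem_append_right P h))
    rcases eq_nil_or_exists_iterate_eq_self_of_iterate_eq_self hP hQ'
      (disjoint_of_nodup_append hPQnd) hm with ⟨rfl, rfl⟩ | ⟨s, rfl, hPs, hQs⟩
    · simp [Function.iterate_fixed (swapAtMax_singleton M), singletonBlockCount_singleton]
    · rw [Finset.sum_range_two_mul]
      simp only [singletonBlockCount_iterate_two_mul_add hP hQ', Finset.sum_add_distrib,
        Finset.sum_range_iterate_succ singletonBlockCount hQs, ihP hPnd hPs, ihQ hQnd hQs]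
      simp only [Finset.sum_const, Finset.card_range, smul_eq_mul]
      rw [if_neg (by simp : P ++ M :: Q ≠ [])]
      split_ifs <;> omega
end OrbitSum

lemma foldl_range_appendNew_eq_map {β : Type*} [DecidableEq β] {f : ℕ → β} {ρ : ℕ}
    (hρ : 0 < ρ) (hinj : Set.InjOn f (Set.Iio ρ)) (hper : ∀ k, f (k % ρ) = f k) (t : ℕ) :
    (range t).foldl (fun acc k => if f k ∈ acc then acc else acc ++ [f k]) [] =
      (range (min t ρ)).map f := by
  induction t with
  | zero => simp
  | succ t ih =>
    rw [range_succ, foldl_append, ih, foldl_cons, foldl_nil]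
    rcases lt_or_ge t ρ with htρ | hρt
    · have hnew : f t ∉ (range t).map f := by
        simp only [mem_map, mem_range, not_exists, not_and]
        exact fun j hj hjt => hj.ne (hinj (hj.trans htρ) htρ hjt)
      rw [min_eq_left htρ.le, min_eq_left htρ, if_neg hnew, range_succ, map_append, map_singleton]
    · have hold : f t ∈ (range ρ).map f := mem_map.2 ⟨t % ρ, mem_range.2 (Nat.mod_lt t hρ), hper t⟩
      rw [min_eq_right hρt, min_eq_right (hρt.trans t.le_succ), if_pos hold]

lemma Equiv.Perm.period_pos {α : Type*} [Finite α] (w : Equiv.Perm α) (x : α) :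
    0 < MulAction.period w x :=
  MulAction.period_pos_of_orderOf_pos (orderOf_pos w) x

section Cycles

variable {n : ℕ} (w : Equiv.Perm (Fin n)) (x : Fin n)

lemma cyc_eq_map_range : cyc w x = (range (MulAction.period w x)).map fun k => (w ^ k) x := by
  have hinj : Set.InjOn (fun k => (w ^ k) x) (Set.Iio (MulAction.period w x)) := by
    have h := iterate_injOn_Iio_minimalPeriod (f := (w • ·)) (x := x)
    simp only [← MulAction.period_eq_minimalPeriod, smul_iterate_apply] at h
    exact h
  have hle : MulAction.period w x ≤ n :=
    (minimalPeriod_le_card (f := (w • ·)) (x := x)).trans_eq (Fintype.card_fin n)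
  rw [cyc, foldl_range_appendNew_eq_map (w.period_pos x)
    hinj (fun k => MulAction.pow_mod_period_smul (m := w) (a := x) k) n, min_eq_right hle]

lemma cyc_eq_cons : cyc w x = x :: (cyc w x).tail := by
  obtain ⟨p, hp⟩ := Nat.exists_eq_add_one.2 (w.period_pos x)
  rw [cyc_eq_map_range, hp, range_succ_eq_map]
  simp

lemma cyc_nodup : (cyc w x).Nodup := by
  rw [cyc_eq_map_range]
  refine nodup_range.map_on fun i hi j hj hij => ?_
  have h := iterate_injOn_Iio_minimalPeriod (f := (w • ·)) (x := x)
  simp only [← MulAction.period_eq_minimalPeriod, smul_iterate_apply] at h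
  exact h (mem_range.1 hi) (mem_range.1 hj) hij

variable {w x} in
lemma mem_cyc_iff {y : Fin n} : y ∈ cyc w x ↔ w.SameCycle x y := by
  rw [cyc_eq_map_range, mem_map]
  constructor
  · rintro ⟨k, -, rfl⟩
    exact ⟨k, by simp⟩
  · intro h
    obtain ⟨k, rfl⟩ := h.exists_nat_pow_eq
    exact ⟨k % MulAction.period w x, mem_range.2 (Nat.mod_lt _ (w.period_pos x)),
      MulAction.pow_mod_period_smul (m := w) (a := x) k⟩

lemma cyc_inv : cyc w⁻¹ x = x :: (cyc w x).tail.reverse := by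
  obtain ⟨p, hp⟩ := Nat.exists_eq_add_one.2 (w.period_pos x)
  rw [cyc_eq_map_range, cyc_eq_map_range, MulAction.period_inv, hp, range_succ_eq_map]
  simp only [map_cons, map_map, tail_cons, pow_zero, Equiv.Perm.one_apply, ← map_reverse,
    range_eq_range', reverse_range', zero_add]
  refine congrArg _ (map_congr_left fun k hk => ?_)
  rw [mem_range'_1] at hk
  simp only [comp_apply, Nat.succ_eq_add_one]
  rw [inv_pow, Equiv.Perm.inv_eq_iff_eq, ← Equiv.Perm.mul_apply, ← pow_add,
    show k + 1 + (p - 1 - k + 1) = p + 1 by omega, ← hp]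
  exact (MulAction.pow_period_smul w x).symm

lemma tail_cyc_eq_nil_iff : (cyc w x).tail = [] ↔ w x = x := by
  rw [← length_eq_zero_iff, length_tail, cyc_eq_map_range, length_map, length_range,
    ← Equiv.Perm.smul_def, ← MulAction.period_eq_one_iff]
  have := w.period_pos x
  omega

end Cycles

section LeaderBlocks

variable {α : Type*} [LinearOrder α]

def IsLeaderBlocks (Bs : List (α × List α)) : Prop :=
  (∀ p ∈ Bs, ∀ x ∈ p.2, x < p.1) ∧ (Bs.map Prod.fst).Pairwise (· < ·)

variable {Bs : List (α × List α)} {p : α × List α}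

lemma IsLeaderBlocks.of_append_singleton (h : IsLeaderBlocks (Bs ++ [p])) :
    IsLeaderBlocks Bs ∧ (∀ x ∈ Bs.flatMap (fun q => q.1 :: q.2), x < p.1) ∧ ∀ x ∈ p.2, x < p.1 := by
  obtain ⟨hblk, hsort⟩ := h
  rw [map_append, pairwise_append] at hsort
  have hlead : ∀ q ∈ Bs, q.1 < p.1 :=
    fun q hq => hsort.2.2 q.1 (mem_map_of_mem hq) p.1 (by simp)
  refine ⟨⟨fun q hq => hblk q (mem_append_left _ hq), hsort.1⟩, fun x hx => ?_,
    hblk p (by simp)⟩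
  obtain ⟨q, hq, hxq⟩ := mem_flatMap.1 hx
  rcases mem_cons.1 hxq with rfl | hx
  exacts [hlead q hq, (hblk q (mem_append_left _ hq) x hx).trans (hlead q hq)]

lemma singletonBlockCount_flatMap (h : IsLeaderBlocks Bs) :
    singletonBlockCount (Bs.flatMap fun p => p.1 :: p.2) = Bs.countP fun p => p.2 = [] := by
  induction Bs using reverseRecOn with
  | nil => simp
  | append_singleton Bs p ih =>
    obtain ⟨hBs, hlt, hp⟩ := h.of_append_singleton
    rw [flatMap_append, flatMap_singleton,
      singletonBlockCount_append_cons hlt fun x hx => (hp x hx).le, ih hBs, countP_append]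
    simp [countP_singleton]

lemma swapAtMax_reverse_flatMap (h : IsLeaderBlocks Bs) :
    swapAtMax (Bs.flatMap fun p => p.1 :: p.2).reverse =
      Bs.flatMap fun p => p.1 :: p.2.reverse := by
  induction Bs using reverseRecOn with
  | nil => simp
  | append_singleton Bs p ih =>
    obtain ⟨hBs, hlt, hp⟩ := h.of_append_singleton
    rw [flatMap_append, flatMap_singleton, reverse_append, reverse_cons, append_assoc,
      singleton_append, swapAtMax_append_cons (fun x hx => hp x (mem_reverse.1 hx))
        fun x hx => (hlt x (mem_reverse.1 hx)).le, ih hBs, flatMap_append, flatMap_singleton]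

end LeaderBlocks

section FoataWord

variable {n : ℕ} (w : Equiv.Perm (Fin n))

def cycleMaxima : List (Fin n) :=
  (finRange n).filter fun x => decide (∀ y ∈ cyc w x, y ≤ x)

def foataBlocks : List (Fin n × List (Fin n)) :=
  (cycleMaxima w).map fun x => (x, (cyc w x).tail)

variable {w} in
lemma mem_cycleMaxima {x : Fin n} : x ∈ cycleMaxima w ↔ ∀ y, w.SameCycle x y → y ≤ x := by
  simp [cycleMaxima, mem_cyc_iff]

lemma foataWord_eq_flatMap_cyc : foataWord w = (cycleMaxima w).flatMap (cyc w) := rfl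

lemma foataWord_eq_flatMap : foataWord w = (foataBlocks w).flatMap fun p => p.1 :: p.2 := by
  rw [foataWord, foataBlocks, flatMap_map]
  exact flatMap_congr fun x _ => cyc_eq_cons w x

lemma isLeaderBlocks_foataBlocks : IsLeaderBlocks (foataBlocks w) := by
  refine ⟨fun p hp y hy => ?_, ?_⟩
  · obtain ⟨x, hx, rfl⟩ := mem_map.1 hp
    have hnd := cyc_nodup w x
    rw [cyc_eq_cons] at hnd
    refine (mem_cycleMaxima.1 hx y (mem_cyc_iff.1 ?_)).lt_of_ne ?_
    · rw [cyc_eq_cons]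
      exact mem_cons_of_mem x hy
    · rintro rfl
      exact (nodup_cons.1 hnd).1 hy
  · rw [foataBlocks, map_map]
    exact ((pairwise_lt_finRange n).filter _).map _ fun _ _ h => h

lemma cycleMaxima_inv : cycleMaxima w⁻¹ = cycleMaxima w :=
  filter_congr fun x _ => by simp [mem_cyc_iff, Equiv.Perm.sameCycle_inv]

lemma foataBlocks_inv : foataBlocks w⁻¹ = (foataBlocks w).map fun p => (p.1, p.2.reverse) := by
  simp [foataBlocks, cycleMaxima_inv, cyc_inv]

theorem foataWord_inv : foataWord w⁻¹ = swapAtMax (foataWord w).reverse := by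
  rw [foataWord_eq_flatMap, foataWord_eq_flatMap,
    swapAtMax_reverse_flatMap (isLeaderBlocks_foataBlocks w), foataBlocks_inv, flatMap_map]

lemma countP_finRange (p : Fin n → Prop) [DecidablePred p] :
    (finRange n).countP (fun x => decide (p x)) = (Finset.univ.filter p).card := by
  rw [Fin.univ_def, ← Finset.card_val, Finset.filter_val, ← Multiset.countP_eq_card_filter]
  rfl

theorem fixCount_eq_singletonBlockCount : fixCount w = singletonBlockCount (foataWord w) := by
  rw [foataWord_eq_flatMap, singletonBlockCount_flatMap (isLeaderBlocks_foataBlocks w),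
    foataBlocks, countP_map, cycleMaxima, countP_filter, fixCount, ← countP_finRange]
  refine countP_congr fun x _ => ?_
  simp only [comp_apply, Bool.and_eq_true, decide_eq_true_eq, tail_cyc_eq_nil_iff]
  refine ⟨fun hx => ⟨hx, fun y hy => ?_⟩, And.left⟩
  rw [cyc_eq_cons, (tail_cyc_eq_nil_iff w x).2 hx, mem_singleton] at hy
  exact hy.le

lemma foataWord_nodup : (foataWord w).Nodup := by
  rw [foataWord_eq_flatMap_cyc]
  refine nodup_flatMap.2 ⟨fun x _ => cyc_nodup w x, ?_⟩
  refine ((pairwise_lt_finRange n).filter _).imp_of_mem fun hx _ hxy z hzx hzy => ?_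
  exact hxy.not_ge (mem_cycleMaxima.1 hx _ ((mem_cyc_iff.1 hzx).trans (mem_cyc_iff.1 hzy).symm))

lemma mem_foataWord (x : Fin n) : x ∈ foataWord w := by
  have hne : cyc w x ≠ [] := ne_nil_of_mem (mem_cyc_iff.2 (Equiv.Perm.SameCycle.refl w x))
  have hxm : w.SameCycle x ((cyc w x).max hne) := mem_cyc_iff.1 (max_mem hne)
  rw [foataWord_eq_flatMap_cyc, mem_flatMap]
  exact ⟨_, mem_cycleMaxima.2 fun y hy => le_max_of_mem (mem_cyc_iff.2 (hxm.trans hy)),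
    mem_cyc_iff.2 hxm.symm⟩

end FoataWord

/-- The statistic `Fix` (number of fixed points) is 1-mesic
for the action of `φ̄ = I ∘ F⁻¹ ∘ R ∘ F` on `S_n`: the average of `Fix` over
every `φ̄`-orbit equals `1`. -/
theorem fix_one_mesic_phiBar (n : ℕ) (hn : 1 ≤ n)
    (φ : Equiv.Perm (Fin n) → Equiv.Perm (Fin n))
    (hφ : ∀ w, IsPhiBar w (φ w)) (w : Equiv.Perm (Fin n)) :
    ∑ k ∈ Finset.range (Function.minimalPeriod φ w),
        (fixCount (φ^[k] w) : ℚ) =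
      (Function.minimalPeriod φ w : ℚ) := by
  have hsemiconj : Semiconj foataWord φ swapAtMax := fun u => by
    rw [← inv_inv (φ u), foataWord_inv, hφ u, reverse_reverse]
  have hperiod : swapAtMax^[minimalPeriod φ w] (foataWord w) = foataWord w := by
    rw [← hsemiconj.iterate_right _ w, iterate_minimalPeriod]
  have hsum := sum_singletonBlockCount_swapAtMax_iterate (foataWord_nodup w) hperiod
  rw [if_neg (ne_nil_of_mem (mem_foataWord w ⟨0, hn⟩))] at hsum
  simp only [fixCount_eq_singletonBlockCount, hsemiconj.iterate_right _ w]
  exact_mod_cast hsum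
end
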